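/- arXiv:2305.01327 — 2 statements merged into one kernel-verified Lean document; each statement's English description precedes it below -/
import Mathlib

section
/- Let f : 𝔹^n → 𝔹^n have non-autoregulated variable n with reduction f̃ : 𝔹^{n-1} → 𝔹^{n-1}. If 𝒜 is an attractor of the asynchronous dynamics of f, then π(𝒜) contains at least one attractor of the asynchronous dynamics of f̃. -/
/-- Asynchronous transition: flip one coordinate i where f disagrees with x. -/
def step {n : ℕ} (f : (Fin n → Bool) → Fin n → Bool) (x y : Fin n → Bool) : Prop :=
  ∃ i : Fin n, f x i ≠ x i ∧ y = Function.update x i (!x i)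

/-- Reachability: reflexive-transitive closure of the asynchronous step relation. -/
def reaches {n : ℕ} (f : (Fin n → Bool) → Fin n → Bool) :
    (Fin n → Bool) → (Fin n → Bool) → Prop :=
  Relation.ReflTransGen (step f)

/-- Trap set: no outgoing asynchronous transition. -/
def IsTrap {n : ℕ} (f : (Fin n → Bool) → Fin n → Bool) (B : Set (Fin n → Bool)) : Prop :=
  ∀ x ∈ B, ∀ y, step f x y → y ∈ B

/-- Attractor: inclusion-minimal nonempty trap set. -/
def IsAttractor {n : ℕ} (f : (Fin n → Bool) → Fin n → Bool) (A : Set (Fin n → Bool)) : Prop :=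
  A.Nonempty ∧ IsTrap f A ∧ ∀ B ⊆ A, B.Nonempty → IsTrap f B → B = A

/-- Subspace: the set of states fixing some coordinates to given constants. -/
def IsSubspace {n : ℕ} (T : Set (Fin n → Bool)) : Prop :=
  ∃ (I : Set (Fin n)) (v : Fin n → Bool), T = {x | ∀ i ∈ I, x i = v i}

/-- Trap space: a subspace that is a trap set. -/
def IsTrapSpace {n : ℕ} (f : (Fin n → Bool) → Fin n → Bool) (T : Set (Fin n → Bool)) : Prop :=
  IsSubspace T ∧ IsTrap f T

/-- Minimal trap space: nonempty trap space minimal under inclusion. -/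
def IsMinTrapSpace {n : ℕ} (f : (Fin n → Bool) → Fin n → Bool) (T : Set (Fin n → Bool)) : Prop :=
  T.Nonempty ∧ IsTrapSpace f T ∧
    ∀ T' ⊆ T, T'.Nonempty → IsTrapSpace f T' → T' = T

/-- The lifting map 𝒮(x) = (x, f_n(x,0)). -/
def liftS {n : ℕ} (f : (Fin (n+1) → Bool) → Fin (n+1) → Bool) (x : Fin n → Bool) :
    Fin (n+1) → Bool :=
  Fin.snoc x (f (Fin.snoc x false) (Fin.last n))

/-- Reduction by elimination of the (non-autoregulated) last variable:
f̃_i(x) = f_i(𝒮(x)). -/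
def reduced {n : ℕ} (f : (Fin (n+1) → Bool) → Fin (n+1) → Bool)
    (x : Fin n → Bool) (i : Fin n) : Bool :=
  f (liftS f x) i.castSucc

/-- Projection π onto the first n coordinates. -/
def proj {n : ℕ} (y : Fin (n+1) → Bool) : Fin n → Bool := Fin.init y

/-!
Because `x_n` does not regulate itself, every state `(x, b)` of a trap set `A` of `f` either
equals `𝒮(x) = (x, f_n(x, 0))` or has an asynchronous transition to it, so `𝒮` maps `π(A)`
into `A`. A transition `x → x'` of `f̃` at `i < n` is then the image under `π` of the transition
`𝒮(x) → (x', f_n(x, 0))` of `f`, so `π(A)` is a nonempty trap set of `f̃`; being finite, it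
contains an attractor.
-/

theorem IsTrap.exists_isAttractor_subset {n : ℕ} {f : (Fin n → Bool) → Fin n → Bool}
    {S : Set (Fin n → Bool)} (hS : IsTrap f S) (hne : S.Nonempty) :
    ∃ A ⊆ S, IsAttractor f A := by
  obtain ⟨A, hAS, ⟨hAne, hAtrap⟩, hmin⟩ :=
    exists_minimal_le_of_wellFoundedLT (fun B => B.Nonempty ∧ IsTrap f B) S ⟨hne, hS⟩
  exact ⟨A, hAS, hAne, hAtrap, fun B hBA hBne hBtrap =>
    hBA.antisymm (hmin ⟨hBne, hBtrap⟩ hBA)⟩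

section Reduction

variable {n : ℕ} {f : (Fin (n+1) → Bool) → Fin (n+1) → Bool}

theorem liftS_castSucc (x : Fin n → Bool) (i : Fin n) : liftS f x i.castSucc = x i :=
  Fin.snoc_castSucc ..

theorem proj_update_liftS (x : Fin n → Bool) (i : Fin n) (b : Bool) :
    proj (Function.update (liftS f x) i.castSucc b) = Function.update x i b := by
  rw [liftS, ← Fin.snoc_update, proj, Fin.init_snoc]

theorem IsTrap.liftS_proj_mem
    (hna : ∀ (x : Fin n → Bool) (a b : Bool),
      f (Fin.snoc x a) (Fin.last n) = f (Fin.snoc x b) (Fin.last n))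
    {A : Set (Fin (n+1) → Bool)} (hA : IsTrap f A) {y : Fin (n+1) → Bool} (hy : y ∈ A) :
    liftS f (proj y) ∈ A := by
  obtain ⟨x, b, rfl⟩ : ∃ x b, y = Fin.snoc x b :=
    ⟨Fin.init y, y (Fin.last n), (Fin.snoc_init_self y).symm⟩
  rw [proj, Fin.init_snoc, liftS, hna x false b]
  by_cases hb : f (Fin.snoc x b) (Fin.last n) = b
  · rwa [hb]
  · refine hA _ hy _ ⟨Fin.last n, by rwa [Fin.snoc_last], ?_⟩
    rw [Fin.update_snoc_last, Fin.snoc_last, Bool.eq_not_iff.mpr hb]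

theorem IsTrap.image_proj
    (hna : ∀ (x : Fin n → Bool) (a b : Bool),
      f (Fin.snoc x a) (Fin.last n) = f (Fin.snoc x b) (Fin.last n))
    {A : Set (Fin (n+1) → Bool)} (hA : IsTrap f A) :
    IsTrap (reduced f) (proj '' A) := by
  rintro _ ⟨y, hy, rfl⟩ _ ⟨i, hi, rfl⟩
  have hlift : liftS f (proj y) ∈ A := hA.liftS_proj_mem hna hy
  have hstep : step f (liftS f (proj y))
      (Function.update (liftS f (proj y)) i.castSucc (!proj y i)) :=
    ⟨i.castSucc, by rwa [liftS_castSucc], by rw [liftS_castSucc]⟩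
  exact ⟨_, hA _ hlift _ hstep, proj_update_liftS ..⟩

end Reduction

theorem stmt4 {n : ℕ} (f : (Fin (n+1) → Bool) → Fin (n+1) → Bool)
    (hna : ∀ (x : Fin n → Bool) (a b : Bool),
      f (Fin.snoc x a) (Fin.last n) = f (Fin.snoc x b) (Fin.last n))
    (A : Set (Fin (n+1) → Bool)) (hA : IsAttractor f A) :
    ∃ A' : Set (Fin n → Bool), IsAttractor (reduced f) A' ∧ A' ⊆ proj '' A := by
  obtain ⟨hne, htrap, -⟩ := hA
  obtain ⟨A', hA'A, hA'⟩ := (htrap.image_proj hna).exists_isAttractor_subset (hne.image proj)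
  exact ⟨A', hA', hA'A⟩
end

section
/- Eliminating a non-autoregulated variable can strictly increase the number of asynchronous attractors: the Boolean network ĥ(x₁,x₂,x₃) = (x₁¬x₃ ∨ x₂¬x₃, x₁¬x₃ ∨ x₂¬x₃, x₁x₂) on 𝔹³ has a unique attractor (the fixed point 000), while its reduction by elimination of the non-autoregulated variable x₃, namely h(x₁,x₂) = (x₁¬x₂ ∨ ¬x₁x₂, x₁¬x₂ ∨ ¬x₁x₂), has two attractors. -/
/-- ĥ(x₁,x₂,x₃) = (x₁¬x₃ ∨ x₂¬x₃, x₁¬x₃ ∨ x₂¬x₃, x₁x₂). -/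
def hhat (x : Fin 3 → Bool) : Fin 3 → Bool :=
  ![(x 0 && !x 2) || (x 1 && !x 2), (x 0 && !x 2) || (x 1 && !x 2), x 0 && x 1]

/-- h(x₁,x₂) = (x₁¬x₂ ∨ ¬x₁x₂, x₁¬x₂ ∨ ¬x₁x₂). -/
def h17 (x : Fin 2 → Bool) : Fin 2 → Bool :=
  ![(x 0 && !x 1) || (!x 0 && x 1), (x 0 && !x 1) || (!x 0 && x 1)]

/-! Every state of `hhat` reaches its fixed point `000`, so `{000}` meets, and hence equals, every
attractor. In `hhat` the escape `111 → 011 → 001 → 000` from the states with `x₁x₂ = 1` relies on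
`x₃` lagging behind `x₁x₂`. In the reduction `x₃` always equals `x₁x₂`, so from `01` and `10` the
only move is back to `11`: the three nonzero states form a strongly connected trap set, an
attractor besides the fixed point `00`. -/

section Attractors

variable {n : ℕ} {f : (Fin n → Bool) → Fin n → Bool} {A B : Set (Fin n → Bool)} {x : Fin n → Bool}

theorem IsTrap.mem_of_reaches (hA : IsTrap f A) (hx : x ∈ A) {y : Fin n → Bool}
    (h : reaches f x y) : y ∈ A := by
  induction h with
  | refl => exact hx
  | tail _ hstep ih => exact hA _ ih _ hstep

theorem IsTrap.inter (hA : IsTrap f A) (hB : IsTrap f B) : IsTrap f (A ∩ B) :=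
  fun x hx y hy => ⟨hA x hx.1 y hy, hB x hx.2 y hy⟩

theorem IsAttractor.eq_of_mem (hA : IsAttractor f A) (hB : IsAttractor f B) (hxA : x ∈ A)
    (hxB : x ∈ B) : A = B := by
  have hAB : IsTrap f (A ∩ B) := hA.2.1.inter hB.2.1
  calc A = A ∩ B := (hA.2.2 _ Set.inter_subset_left ⟨x, hxA, hxB⟩ hAB).symm
    _ = B := hB.2.2 _ Set.inter_subset_right ⟨x, hxA, hxB⟩ hAB

theorem IsTrap.isAttractor (hA : IsTrap f A) (hx : x ∈ A) (hto : ∀ y ∈ A, reaches f y x)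
    (hfrom : ∀ y ∈ A, reaches f x y) : IsAttractor f A := by
  refine ⟨⟨x, hx⟩, hA, fun B hBA ⟨b, hb⟩ hB => hBA.antisymm fun y hy => ?_⟩
  exact hB.mem_of_reaches hb ((hto b (hBA hb)).trans (hfrom y hy))

theorem isAttractor_singleton (hx : f x = x) : IsAttractor f {x} := by
  have htrap : IsTrap f {x} := by
    rintro _ rfl y ⟨i, hi, -⟩
    exact absurd (congrFun hx i) hi
  refine htrap.isAttractor rfl ?_ ?_ <;> rintro _ rfl <;> exact .refl

end Attractors

theorem reduced_hhat (x : Fin 2 → Bool) (i : Fin 2) : reduced hhat x i = h17 x i := by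
  revert x i; decide

theorem hhat_reaches_zero (x : Fin 3 → Bool) : reaches hhat x ![false, false, false] := by
  have r001 : reaches hhat ![false, false, true] ![false, false, false] :=
    .single ⟨2, by decide, by decide⟩
  have r011 : reaches hhat ![false, true, true] ![false, false, false] :=
    .head ⟨1, by decide, by decide⟩ r001
  have r111 : reaches hhat ![true, true, true] ![false, false, false] :=
    .head ⟨0, by decide, by decide⟩ r011
  have r110 : reaches hhat ![true, true, false] ![false, false, false] :=
    .head ⟨2, by decide, by decide⟩ r111
  revert x
  simp only [Fin.forall_fin_succ_pi, Fin.forall_fin_zero_pi, Bool.forall_bool]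
  exact ⟨⟨⟨.refl, r001⟩, .head ⟨0, by decide, by decide⟩ r110, r011⟩,
    ⟨.head ⟨1, by decide, by decide⟩ r110, .head ⟨0, by decide, by decide⟩ r001⟩, r110, r111⟩

theorem isAttractor_hhat_iff {A : Set (Fin 3 → Bool)} :
    IsAttractor hhat A ↔ A = {![false, false, false]} := by
  have hzero : IsAttractor hhat {![false, false, false]} := isAttractor_singleton (by decide)
  refine ⟨fun hA => ?_, fun h => h ▸ hzero⟩
  obtain ⟨x, hx⟩ := hA.1
  exact hA.eq_of_mem hzero (hA.2.1.mem_of_reaches hx (hhat_reaches_zero x)) rfl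

theorem isTrap_h17_ne_zero : IsTrap h17 {y | y ≠ ![false, false]} := by
  unfold IsTrap step; decide

theorem isAttractor_h17_ne_zero : IsAttractor h17 {y | y ≠ ![false, false]} := by
  have e01 : step h17 ![false, true] ![true, true] := ⟨0, by decide, by decide⟩
  have e10 : step h17 ![true, false] ![true, true] := ⟨1, by decide, by decide⟩
  have e11₀ : step h17 ![true, true] ![false, true] := ⟨0, by decide, by decide⟩
  have e11₁ : step h17 ![true, true] ![true, false] := ⟨1, by decide, by decide⟩
  refine isTrap_h17_ne_zero.isAttractor (x := ![true, true]) (by decide) ?_ ?_ <;>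
    simp only [Set.mem_ofPred_eq, Fin.forall_fin_succ_pi, Fin.forall_fin_zero_pi, Bool.forall_bool]
  · exact ⟨⟨fun h => absurd rfl h, fun _ => .single e01⟩, fun _ => .single e10, fun _ => .refl⟩
  · exact ⟨⟨fun h => absurd rfl h, fun _ => .single e11₀⟩, fun _ => .single e11₁, fun _ => .refl⟩

theorem stmt17 :
    (∀ (x : Fin 2 → Bool) (i : Fin 2), reduced hhat x i = h17 x i) ∧
    IsAttractor hhat {y | y = fun _ => false} ∧
    (∀ A, IsAttractor hhat A → A = {y | y = fun _ => false}) ∧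
    (∃ A B : Set (Fin 2 → Bool), A ≠ B ∧ IsAttractor h17 A ∧ IsAttractor h17 B ∧
      ∀ C, IsAttractor h17 C → C = A ∨ C = B) := by
  have hzero : (fun _ => false : Fin 3 → Bool) = ![false, false, false] := by decide
  rw [hzero, Set.ofPred_eq_eq_singleton]
  have h00 : IsAttractor h17 {![false, false]} := isAttractor_singleton (by decide)
  refine ⟨reduced_hhat, isAttractor_hhat_iff.2 rfl, fun A => isAttractor_hhat_iff.1,
    {![false, false]}, {y | y ≠ ![false, false]}, fun h => ?_, h00, isAttractor_h17_ne_zero,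
    fun C hC => ?_⟩
  · exact (Set.ext_iff.1 h ![false, false]).1 rfl rfl
  · obtain ⟨x, hx⟩ := hC.1
    by_cases hx0 : x = ![false, false]
    · exact .inl (hC.eq_of_mem h00 hx hx0)
    · exact .inr (hC.eq_of_mem isAttractor_h17_ne_zero hx hx0)
end
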